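/- arXiv:1612.05685 — 2 statements merged into one kernel-verified Lean document; each statement's English description precedes it below -/
import Mathlib

section
/- Let f be twice differentiable on an open interval containing [m, M] with k ≤ f″(z) ≤ K for all z ∈ [m, M], where K > k ≥ 0. Then for every z ∈ [m, M]: (K/4)·[(M − m)²/12 + (z − (m + M)/2)²] ≥ (1/2)·[f(z) + ((M − z)·f(M) + (z − m)·f(m))/(M − m)] − (1/(M − m))·∫_m^M f(t) dt ≥ (k/4)·[(M − m)²/12 + (z − (m + M)/2)²]. -/
/-!
If `c ≤ f''` on `[m, M]`, then `g t = f t - c t² / 2` is convex, so its integral over each of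
`[m, z]` and `[z, M]` is at most the corresponding trapezoid. Adding the two bounds says that the
trapezoid-type functional in the statement is nonnegative at `g`; being linear in `f`, and equal to
`((M - m)² / 12 + (z - (m + M) / 2)²) / 4` at `t² / 2`, it is at least `c` times that quantity at
`f`. The upper bound is the lower bound for `-f`.
-/

open MeasureTheory Real Set intervalIntegral

lemma ConvexOn.intervalIntegral_le_trapezoid {h : ℝ → ℝ} {p q : ℝ} (hpq : p ≤ q)
    (hc : ConvexOn ℝ (Icc p q) h) (hct : ContinuousOn h (Icc p q)) :
    ∫ t in p..q, h t ≤ (q - p) * (h p + h q) / 2 := by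
  rcases hpq.eq_or_lt with rfl | hpq
  · simp
  have hqp : 0 < q - p := sub_pos.2 hpq
  have hchord : ∀ t ∈ Ioo p q, h t ≤ ((q - t) * h p + (t - p) * h q) / (q - p) :=
    fun t ht => (le_div_iff₀' hqp).2 <| hc.secant_mono_aux1 (left_mem_Icc.2 hpq.le)
      (right_mem_Icc.2 hpq.le) ht.1 ht.2
  calc ∫ t in p..q, h t
      ≤ ∫ t in p..q, ((q - t) * h p + (t - p) * h q) / (q - p) :=
        integral_mono_on_of_le_Ioo hpq.le (hct.intervalIntegrable_of_Icc hpq.le)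
          (Continuous.intervalIntegrable (by fun_prop) _ _) hchord
    _ = (q - p) * (h p + h q) / 2 := by
        rw [intervalIntegral.integral_div, intervalIntegral.integral_add
          (Continuous.intervalIntegrable (by fun_prop) _ _)
          (Continuous.intervalIntegrable (by fun_prop) _ _),
          intervalIntegral.integral_mul_const, intervalIntegral.integral_mul_const,
          integral_comp_sub_left (fun x => x), integral_comp_sub_right (fun x => x)]
        simp only [integral_id]
        field_simp
        ring

lemma ConvexOn.intervalIntegral_le_two_trapezoids {h : ℝ → ℝ} {p q z : ℝ} (hpz : p ≤ z)
    (hzq : z ≤ q) (hc : ConvexOn ℝ (Icc p q) h) (hct : ContinuousOn h (Icc p q)) :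
    ∫ t in p..q, h t ≤ (z - p) * (h p + h z) / 2 + (q - z) * (h z + h q) / 2 := by
  have hl : Icc p z ⊆ Icc p q := Icc_subset_Icc le_rfl hzq
  have hr : Icc z q ⊆ Icc p q := Icc_subset_Icc hpz le_rfl
  rw [← integral_add_adjacent_intervals ((hct.mono hl).intervalIntegrable_of_Icc hpz)
    ((hct.mono hr).intervalIntegrable_of_Icc hzq)]
  exact add_le_add
    ((hc.subset hl (convex_Icc _ _)).intervalIntegral_le_trapezoid hpz (hct.mono hl))
    ((hc.subset hr (convex_Icc _ _)).intervalIntegral_le_trapezoid hzq (hct.mono hr))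

lemma convexOn_sub_half_mul_sq {D : Set ℝ} (hD : Convex ℝ D) {f : ℝ → ℝ} {c : ℝ}
    (hf : ContinuousOn f D) (hf' : ∀ x ∈ interior D, DifferentiableAt ℝ f x)
    (hf'' : ∀ x ∈ interior D, DifferentiableAt ℝ (deriv f) x)
    (hc : ∀ x ∈ interior D, c ≤ deriv (deriv f) x) :
    ConvexOn ℝ D (fun t => f t - c / 2 * t ^ 2) := by
  refine convexOn_of_hasDerivWithinAt2_nonneg hD (by fun_prop)
    (f' := fun t => deriv f t - c * t) (f'' := fun t => deriv (deriv f) t - c)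
    (fun x hx => ?_) (fun x hx => ?_) (fun x hx => sub_nonneg.2 (hc x hx))
  · exact ((hf' x hx).hasDerivAt.sub ((hasDerivAt_pow 2 x).const_mul (c / 2))).hasDerivWithinAt
      |>.congr_deriv (by norm_num; ring)
  · exact ((hf'' x hx).hasDerivAt.sub (hasDerivAt_const_mul c)).hasDerivWithinAt

lemma mul_sq_le_trapezoid_sub_integral {f : ℝ → ℝ} {m M z c : ℝ} (hmM : m < M)
    (hz : z ∈ Icc m M) (hf : ContinuousOn f (Icc m M))
    (hf' : ∀ x ∈ Ioo m M, DifferentiableAt ℝ f x)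
    (hf'' : ∀ x ∈ Ioo m M, DifferentiableAt ℝ (deriv f) x)
    (hc : ∀ x ∈ Ioo m M, c ≤ deriv (deriv f) x) :
    c / 4 * ((M - m) ^ 2 / 12 + (z - (m + M) / 2) ^ 2) ≤
      (1 / 2) * (f z + ((M - z) * f M + (z - m) * f m) / (M - m))
        - (1 / (M - m)) * ∫ t in m..M, f t := by
  rw [← interior_Icc] at hf' hf'' hc
  have hconv := convexOn_sub_half_mul_sq (convex_Icc m M) hf hf' hf'' hc
  have htrap := hconv.intervalIntegral_le_two_trapezoids hz.1 hz.2 (by fun_prop)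
  have hint : ∫ t in m..M, (f t - c / 2 * t ^ 2) =
      (∫ t in m..M, f t) - c / 6 * (M ^ 3 - m ^ 3) := by
    rw [intervalIntegral.integral_sub (hf.intervalIntegrable_of_Icc hmM.le)
      (Continuous.intervalIntegrable (by fun_prop) _ _), intervalIntegral.integral_const_mul,
      integral_pow]
    ring
  rw [hint] at htrap
  have hMm : 0 < M - m := sub_pos.2 hmM
  rw [← sub_nonneg]
  calc (0 : ℝ) ≤ ((z - m) * ((f m - c / 2 * m ^ 2) + (f z - c / 2 * z ^ 2)) / 2
        + (M - z) * ((f z - c / 2 * z ^ 2) + (f M - c / 2 * M ^ 2)) / 2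
        - ((∫ t in m..M, f t) - c / 6 * (M ^ 3 - m ^ 3))) / (M - m) :=
        div_nonneg (sub_nonneg.2 htrap) hMm.le
    _ = _ := by field_simp; ring

lemma trapezoid_sub_integral_le_mul_sq {f : ℝ → ℝ} {m M z C : ℝ} (hmM : m < M)
    (hz : z ∈ Icc m M) (hf : ContinuousOn f (Icc m M))
    (hf' : ∀ x ∈ Ioo m M, DifferentiableAt ℝ f x)
    (hf'' : ∀ x ∈ Ioo m M, DifferentiableAt ℝ (deriv f) x)
    (hC : ∀ x ∈ Ioo m M, deriv (deriv f) x ≤ C) :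
    (1 / 2) * (f z + ((M - z) * f M + (z - m) * f m) / (M - m))
        - (1 / (M - m)) * ∫ t in m..M, f t ≤
      C / 4 * ((M - m) ^ 2 / 12 + (z - (m + M) / 2) ^ 2) := by
  have hneg := mul_sq_le_trapezoid_sub_integral (f := fun t => -f t) (c := -C) hmM hz hf.neg
    (fun x hx => (hf' x hx).neg)
    (fun x hx => by simpa only [deriv.fun_neg'] using (hf'' x hx).fun_neg)
    (fun x hx => by simpa only [deriv.fun_neg', neg_le_neg_iff] using hC x hx)
  rw [intervalIntegral.integral_neg] at hneg
  linarith [show ((M - z) * -f M + (z - m) * -f m) / (M - m)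
    = -(((M - z) * f M + (z - m) * f m) / (M - m)) by ring]

theorem stmt_14_general (f : ℝ → ℝ) (m M : ℝ) (hmM : m < M)
    (a b : ℝ) (ham : a < m) (hMb : M < b)
    (hdiff1 : ∀ x ∈ Set.Ioo a b, DifferentiableAt ℝ f x)
    (hdiff2 : ∀ x ∈ Set.Ioo a b, DifferentiableAt ℝ (deriv f) x)
    (k K : ℝ)
    (hbound : ∀ z ∈ Set.Icc m M, k ≤ deriv (deriv f) z ∧ deriv (deriv f) z ≤ K) :
    ∀ z ∈ Set.Icc m M,
      K / 4 * ((M - m) ^ 2 / 12 + (z - (m + M) / 2) ^ 2) ≥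
        (1 / 2) * (f z + ((M - z) * f M + (z - m) * f m) / (M - m))
          - (1 / (M - m)) * ∫ t in m..M, f t ∧
      (1 / 2) * (f z + ((M - z) * f M + (z - m) * f m) / (M - m))
          - (1 / (M - m)) * ∫ t in m..M, f t ≥
        k / 4 * ((M - m) ^ 2 / 12 + (z - (m + M) / 2) ^ 2) := by
  intro z hz
  have hIcc : Icc m M ⊆ Ioo a b := Icc_subset_Ioo ham hMb
  have hIoo : Ioo m M ⊆ Ioo a b := Ioo_subset_Icc_self.trans hIcc
  have hf : ContinuousOn f (Icc m M) :=
    fun x hx => (hdiff1 x (hIcc hx)).continuousAt.continuousWithinAt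
  have hf' : ∀ x ∈ Ioo m M, DifferentiableAt ℝ f x := fun x hx => hdiff1 x (hIoo hx)
  have hf'' : ∀ x ∈ Ioo m M, DifferentiableAt ℝ (deriv f) x := fun x hx => hdiff2 x (hIoo hx)
  exact ⟨trapezoid_sub_integral_le_mul_sq hmM hz hf hf' hf''
      fun x hx => (hbound x (Ioo_subset_Icc_self hx)).2,
    mul_sq_le_trapezoid_sub_integral hmM hz hf hf' hf''
      fun x hx => (hbound x (Ioo_subset_Icc_self hx)).1⟩

theorem stmt_14 (f : ℝ → ℝ) (m M : ℝ) (hmM : m < M)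
    (a b : ℝ) (ham : a < m) (hMb : M < b)
    (hdiff1 : ∀ x ∈ Set.Ioo a b, DifferentiableAt ℝ f x)
    (hdiff2 : ∀ x ∈ Set.Ioo a b, DifferentiableAt ℝ (deriv f) x)
    (k K : ℝ) (hk : 0 ≤ k) (hkK : k < K)
    (hbound : ∀ z ∈ Set.Icc m M, k ≤ deriv (deriv f) z ∧ deriv (deriv f) z ≤ K) :
    ∀ z ∈ Set.Icc m M,
      K / 4 * ((M - m) ^ 2 / 12 + (z - (m + M) / 2) ^ 2) ≥
        (1 / 2) * (f z + ((M - z) * f M + (z - m) * f m) / (M - m))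
          - (1 / (M - m)) * ∫ t in m..M, f t ∧
      (1 / 2) * (f z + ((M - z) * f M + (z - m) * f m) / (M - m))
          - (1 / (M - m)) * ∫ t in m..M, f t ≥
        k / 4 * ((M - m) ^ 2 / 12 + (z - (m + M) / 2) ^ 2) :=
  stmt_14_general f m M hmM a b ham hMb hdiff1 hdiff2 k K hbound
end

section
/- Let f be twice differentiable on an open interval containing [m, M] with k ≤ f″(z) ≤ K for all z ∈ [m, M], where K > k ≥ 0. Then for every t ∈ [m, M]: (K/2)·[(M − m)²/12 + (t − (m + M)/2)²] ≥ (1/(M − m))·∫_m^M f(z) dz − f(t) − ((m + M)/2 − t)·f′(t) ≥ (k/2)·[(M − m)²/12 + (t − (m + M)/2)²]. -/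
/-! If `k ≤ f'' ≤ K` on `[m, M]`, then `f - k x²/2` is convex and `f - K x²/2` is concave there,
so comparing each with its tangent line at `t` traps the Taylor remainder
`f z - f t - (z - t) f'(t)` between `k (z - t)²/2` and `K (z - t)²/2`. Averaging over
`z ∈ [m, M]` turns `z - t` into `(m + M)/2 - t` and `(z - t)²` into
`(M - m)²/12 + (t - (m + M)/2)²`. -/

open MeasureTheory Real Set

theorem ConvexOn.add_mul_sub_le_of_hasDerivAt {S : Set ℝ} {f : ℝ → ℝ} {f' x y : ℝ}
    (hfc : ConvexOn ℝ S f) (hx : x ∈ S) (hy : y ∈ S) (hf : HasDerivAt f f' x) :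
    f x + f' * (y - x) ≤ f y := by
  rcases lt_trichotomy x y with hxy | rfl | hyx
  · have := hfc.le_slope_of_hasDerivAt hx hy hxy hf
    rw [slope_def_field, le_div_iff₀ (sub_pos.2 hxy)] at this
    linarith
  · simp
  · have := hfc.slope_le_of_hasDerivAt hy hx hyx hf
    rw [slope_def_field, div_le_iff₀ (sub_pos.2 hyx)] at this
    linarith

theorem HasDerivAt.sub_mul_sq {f : ℝ → ℝ} {f' x : ℝ} (hf : HasDerivAt f f' x) (c : ℝ) :
    HasDerivAt (fun x => f x - c / 2 * x ^ 2) (f' - c * x) x :=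
  (hf.sub ((hasDerivAt_pow 2 x).const_mul (c / 2))).congr_deriv (by norm_num; ring)

section TaylorRemainder

variable {D : Set ℝ} {f f' f'' : ℝ → ℝ} {c t z : ℝ}

theorem convexOn_sub_mul_sq_of_le_deriv2 (hD : Convex ℝ D)
    (hf : ∀ x ∈ D, HasDerivAt f (f' x) x) (hf' : ∀ x ∈ D, HasDerivAt f' (f'' x) x)
    (hc : ∀ x ∈ D, c ≤ f'' x) :
    ConvexOn ℝ D fun x => f x - c / 2 * x ^ 2 := by
  have hg : ∀ x ∈ D, HasDerivAt (fun x => f x - c / 2 * x ^ 2) (f' x - c * x) x :=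
    fun x hx => (hf x hx).sub_mul_sq c
  have hg' : ∀ x ∈ D, HasDerivAt (fun x => f' x - c * x) (f'' x - c) x :=
    fun x hx => ((hf' x hx).sub ((hasDerivAt_id x).const_mul c)).congr_deriv (by ring)
  exact convexOn_of_hasDerivWithinAt2_nonneg hD
    (fun x hx => (hg x hx).continuousAt.continuousWithinAt)
    (fun x hx => (hg x (interior_subset hx)).hasDerivWithinAt)
    (fun x hx => (hg' x (interior_subset hx)).hasDerivWithinAt)
    (fun x hx => sub_nonneg.2 (hc x (interior_subset hx)))

theorem mul_sq_le_taylor_remainder_of_le_deriv2 (hD : Convex ℝ D)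
    (hf : ∀ x ∈ D, HasDerivAt f (f' x) x) (hf' : ∀ x ∈ D, HasDerivAt f' (f'' x) x)
    (hc : ∀ x ∈ D, c ≤ f'' x) (ht : t ∈ D) (hz : z ∈ D) :
    c / 2 * (z - t) ^ 2 ≤ f z - f t - (z - t) * f' t := by
  have htangent := (convexOn_sub_mul_sq_of_le_deriv2 hD hf hf' hc).add_mul_sub_le_of_hasDerivAt
    ht hz ((hf t ht).sub_mul_sq c)
  linarith

theorem taylor_remainder_le_mul_sq_of_deriv2_le (hD : Convex ℝ D)
    (hf : ∀ x ∈ D, HasDerivAt f (f' x) x) (hf' : ∀ x ∈ D, HasDerivAt f' (f'' x) x)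
    (hc : ∀ x ∈ D, f'' x ≤ c) (ht : t ∈ D) (hz : z ∈ D) :
    f z - f t - (z - t) * f' t ≤ c / 2 * (z - t) ^ 2 := by
  have := mul_sq_le_taylor_remainder_of_le_deriv2 (f := -f) (f' := -f') (f'' := -f'') (c := -c)
    hD (fun x hx => (hf x hx).neg) (fun x hx => (hf' x hx).neg)
    (fun x hx => neg_le_neg (hc x hx)) ht hz
  simp only [Pi.neg_apply] at this
  linarith

end TaylorRemainder

section IntervalMean

variable {m M : ℝ}

theorem mean_sub_sq_eq (hmM : m ≠ M) (t : ℝ) :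
    1 / (M - m) * ∫ z in m..M, (z - t) ^ 2 = (M - m) ^ 2 / 12 + (t - (m + M) / 2) ^ 2 := by
  rw [intervalIntegral.integral_comp_sub_right (fun z => z ^ 2), integral_pow]
  field_simp [sub_ne_zero.2 hmM.symm]
  ring

theorem mean_taylor_remainder_eq {f : ℝ → ℝ} (hmM : m ≠ M) (hf : IntervalIntegrable f volume m M)
    (t d : ℝ) :
    1 / (M - m) * ∫ z in m..M, (f z - f t - (z - t) * d) =
      1 / (M - m) * (∫ z in m..M, f z) - f t - ((m + M) / 2 - t) * d := by
  have hlin : IntervalIntegrable (fun z : ℝ => (z - t) * d) volume m M :=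
    (by fun_prop : Continuous fun z : ℝ => (z - t) * d).intervalIntegrable m M
  rw [intervalIntegral.integral_sub (hf.sub intervalIntegrable_const) hlin,
    intervalIntegral.integral_sub hf intervalIntegrable_const, intervalIntegral.integral_mul_const,
    intervalIntegral.integral_comp_sub_right (fun z => z), integral_id, intervalIntegral.integral_const,
    smul_eq_mul]
  field_simp [sub_ne_zero.2 hmM.symm]
  ring

end IntervalMean

theorem stmt_15_general (f : ℝ → ℝ) (m M : ℝ) (hmM : m < M)
    (a b : ℝ) (ham : a < m) (hMb : M < b)
    (hdiff1 : ∀ x ∈ Set.Ioo a b, DifferentiableAt ℝ f x)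
    (hdiff2 : ∀ x ∈ Set.Ioo a b, DifferentiableAt ℝ (deriv f) x)
    (k K : ℝ)
    (hbound : ∀ z ∈ Set.Icc m M, k ≤ deriv (deriv f) z ∧ deriv (deriv f) z ≤ K) :
    ∀ t ∈ Set.Icc m M,
      K / 2 * ((M - m) ^ 2 / 12 + (t - (m + M) / 2) ^ 2) ≥
        (1 / (M - m)) * (∫ z in m..M, f z) - f t - ((m + M) / 2 - t) * deriv f t ∧
      (1 / (M - m)) * (∫ z in m..M, f z) - f t - ((m + M) / 2 - t) * deriv f t ≥
        k / 2 * ((M - m) ^ 2 / 12 + (t - (m + M) / 2) ^ 2) := by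
  intro t ht
  have hsub : Icc m M ⊆ Ioo a b := Icc_subset_Ioo ham hMb
  have hf : ∀ x ∈ Icc m M, HasDerivAt f (deriv f x) x := fun x hx => (hdiff1 x (hsub hx)).hasDerivAt
  have hf' : ∀ x ∈ Icc m M, HasDerivAt (deriv f) (deriv (deriv f) x) x :=
    fun x hx => (hdiff2 x (hsub hx)).hasDerivAt
  have hfint : IntervalIntegrable f volume m M :=
    ContinuousOn.intervalIntegrable_of_Icc hmM.le fun x hx => (hf x hx).continuousAt.continuousWithinAt
  have hquad (c : ℝ) : IntervalIntegrable (fun z => c / 2 * (z - t) ^ 2) volume m M :=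
    (by fun_prop : Continuous fun z : ℝ => c / 2 * (z - t) ^ 2).intervalIntegrable m M
  have hrem : IntervalIntegrable (fun z => f z - f t - (z - t) * deriv f t) volume m M :=
    (hfint.sub intervalIntegrable_const).sub
      ((by fun_prop : Continuous fun z : ℝ => (z - t) * deriv f t).intervalIntegrable m M)
  have hmean (c : ℝ) : 1 / (M - m) * ∫ z in m..M, c / 2 * (z - t) ^ 2 =
      c / 2 * ((M - m) ^ 2 / 12 + (t - (m + M) / 2) ^ 2) := by
    rw [intervalIntegral.integral_const_mul, mul_left_comm, mean_sub_sq_eq hmM.ne]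
  have hpos : 0 ≤ 1 / (M - m) := by have := sub_pos.2 hmM; positivity
  rw [← hmean K, ← hmean k, ← mean_taylor_remainder_eq hmM.ne hfint]
  exact ⟨mul_le_mul_of_nonneg_left (intervalIntegral.integral_mono_on hmM.le hrem (hquad K)
      fun z hz => taylor_remainder_le_mul_sq_of_deriv2_le (convex_Icc m M) hf hf'
        (fun x hx => (hbound x hx).2) ht hz) hpos,
    mul_le_mul_of_nonneg_left (intervalIntegral.integral_mono_on hmM.le (hquad k) hrem
      fun z hz => mul_sq_le_taylor_remainder_of_le_deriv2 (convex_Icc m M) hf hf'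
        (fun x hx => (hbound x hx).1) ht hz) hpos⟩

theorem stmt_15 (f : ℝ → ℝ) (m M : ℝ) (hmM : m < M)
    (a b : ℝ) (ham : a < m) (hMb : M < b)
    (hdiff1 : ∀ x ∈ Set.Ioo a b, DifferentiableAt ℝ f x)
    (hdiff2 : ∀ x ∈ Set.Ioo a b, DifferentiableAt ℝ (deriv f) x)
    (k K : ℝ) (hk : 0 ≤ k) (hkK : k < K)
    (hbound : ∀ z ∈ Set.Icc m M, k ≤ deriv (deriv f) z ∧ deriv (deriv f) z ≤ K) :
    ∀ t ∈ Set.Icc m M,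
      K / 2 * ((M - m) ^ 2 / 12 + (t - (m + M) / 2) ^ 2) ≥
        (1 / (M - m)) * (∫ z in m..M, f z) - f t - ((m + M) / 2 - t) * deriv f t ∧
      (1 / (M - m)) * (∫ z in m..M, f z) - f t - ((m + M) / 2 - t) * deriv f t ≥
        k / 2 * ((M - m) ^ 2 / 12 + (t - (m + M) / 2) ^ 2) :=
  stmt_15_general f m M hmM a b ham hMb hdiff1 hdiff2 k K hbound
end
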